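/- Let N > 5040 be an integer and p a prime not dividing N with p < N. Then G(N) > G(Np) if and only if p·(log p)·(1 + Σ_{k≥1} ((−1)^k/(k+1))·(log p/log N)^k) > log N · log log N. -/

import Mathlib

/-!
Since `σ(Np) = σ(N)(p + 1)`, the inequality `G N > G (N p)` is equivalent to
`log log N < p (log log (N p) - log log N) = p log (1 + x)` with `x = log p / log N`.
For `0 < x < 1` the series is the Mercator series of `log (1 + x) / x - 1`, so the left side
of the stated criterion is `p log N log (1 + x)`, and the two criteria differ by the factor `log N`.
-/

/-- `G n = σ(n) / (n * log log n)`. -/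
noncomputable def G (n : ℕ) : ℝ :=
  (∑ d ∈ n.divisors, (d : ℝ)) / (n * Real.log (Real.log n))

open Real

theorem Real.hasSum_log_one_add_div_sub_one {x : ℝ} (hx : |x| < 1) (hx0 : x ≠ 0) :
    HasSum (fun k : ℕ => ((-1 : ℝ) ^ (k + 1) / ((k : ℝ) + 2)) * x ^ (k + 1))
      (log (1 + x) / x - 1) := by
  have h := ((hasSum_nat_add_iff' 1).2
    (hasSum_pow_div_log_of_abs_lt_one (x := -x) (by rwa [abs_neg]))).mul_left (-x⁻¹)
  simp only [Finset.sum_range_one, sub_neg_eq_add, zero_add, pow_one, Nat.cast_zero, div_one]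
    at h
  have hsum : -x⁻¹ * (-log (1 + x) + x) = log (1 + x) / x - 1 := by
    field_simp
    ring
  refine hsum ▸ h.congr_fun fun k => ?_
  have hk : (k : ℝ) + 2 ≠ 0 := by positivity
  push_cast
  rw [neg_pow x]
  field_simp
  ring

theorem Nat.sum_divisors_mul_prime {n p : ℕ} (hp : p.Prime) (hpn : ¬ p ∣ n) :
    ∑ d ∈ (n * p).divisors, d = (∑ d ∈ n.divisors, d) * (p + 1) := by
  rw [Nat.Coprime.sum_divisors_mul (hp.coprime_iff_not_dvd.2 hpn).symm, hp.divisors,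
    Finset.sum_pair hp.one_lt.ne, add_comm]

theorem Real.log_log_mul {a b : ℝ} (ha : 0 < log a) (hb : 1 ≤ b) :
    log (log (a * b)) = log (log a) + log (1 + log b / log a) := by
  have ha0 : a ≠ 0 := by rintro rfl; simp at ha
  have hlogb : 0 ≤ log b := log_nonneg hb
  rw [log_mul ha0 (by positivity), ← log_mul ha.ne' (by positivity), mul_add, mul_one,
    mul_div_cancel₀ _ ha.ne']

theorem G_mul_prime_lt_iff {N p : ℕ} (hp : p.Prime) (hpN : ¬ p ∣ N) (hN : 1 < log N) :
    G (N * p) < G N ↔ log (log N) < p * (log (log (N * p)) - log (log N)) := by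
  have hN0 : (0 : ℝ) < N := by
    rcases Nat.eq_zero_or_pos N with rfl | h
    · norm_num at hN
    · exact_mod_cast h
  have hp1 : (1 : ℝ) < p := by exact_mod_cast hp.one_lt
  have hL : 0 < log (log N) := log_pos hN
  have hLL' : log (log N) < log (log (N * p)) := by
    gcongr
    exact lt_mul_of_one_lt_right hN0 hp1
  have hσ : (0 : ℝ) < ∑ d ∈ N.divisors, (d : ℝ) :=
    Finset.sum_pos (fun d hd => by exact_mod_cast Nat.pos_of_mem_divisors hd)
      ⟨N, Nat.mem_divisors_self N (by exact_mod_cast hN0.ne')⟩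
  unfold G
  rw [← Nat.cast_sum, Nat.sum_divisors_mul_prime hp hpN]
  push_cast
  set σ := ∑ d ∈ N.divisors, (d : ℝ)
  set L := log (log N)
  set L' := log (log (N * p))
  have hL' : 0 < L' := hL.trans hLL'
  rw [div_lt_div_iff₀ (by positivity) (by positivity),
    show σ * (p + 1) * (N * L) = σ * N * ((p + 1) * L) by ring,
    show σ * (N * p * L') = σ * N * (p * L') by ring, mul_lt_mul_iff_right₀ (by positivity)]
  constructor <;> intro h <;> linarith

theorem stmt_10 (N p : ℕ) (hN : N > 5040) (hp : p.Prime) (hpN : ¬ p ∣ N)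
    (hlt : p < N) :
    G N > G (N * p) ↔
      (p : ℝ) * Real.log p *
          (1 + ∑' k : ℕ,
            ((-1 : ℝ) ^ (k + 1) / ((k : ℝ) + 2)) * (Real.log p / Real.log N) ^ (k + 1)) >
        Real.log N * Real.log (Real.log N) := by
  have hlogN : 1 < log N :=
    (lt_log_iff_exp_lt (by positivity)).2 (by
      have : (5040 : ℝ) < N := by exact_mod_cast hN
      linarith [exp_one_lt_d9])
  have hp1 : (1 : ℝ) < p := by exact_mod_cast hp.one_lt
  have hlogp : 0 < log p := log_pos hp1
  set x := log p / log N with hx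
  have hx0 : 0 < x := by positivity
  have hx1 : x < 1 :=
    (div_lt_one (by positivity)).2 (log_lt_log (by positivity) (by exact_mod_cast hlt))
  have hseries : (p : ℝ) * log p * (1 + (log (1 + x) / x - 1)) = log N * (p * log (1 + x)) := by
    rw [hx]
    field_simp
    ring
  rw [(hasSum_log_one_add_div_sub_one (abs_lt.2 ⟨by linarith, hx1⟩) hx0.ne').tsum_eq, hseries,
    gt_iff_lt, gt_iff_lt, G_mul_prime_lt_iff hp hpN hlogN, log_log_mul (by linarith) hp1.le,
    add_sub_cancel_left, mul_lt_mul_iff_right₀ (by linarith)]
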